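/- arXiv:2601.05581 — 7 statements merged into one kernel-verified Lean document; each statement's English description precedes it below -/
import Mathlib

section
/- Let C₁,…,C_m be codes in F_{q^m}^t with covering radii R₁,…,R_m in the Hamming metric. Then the sum-rank code SR_covering(C₁,…,C_m) ⊆ (F_q^{m×m})^t has sum-rank covering radius at most R₁ + R₂ + ⋯ + R_m. -/
/-- The `m × m` matrix `M₁(α₁) + ⋯ + M_m(α_m)` over `F_q` whose `i`-th row is the
coordinate vector of `α i` with respect to the basis `b` of `K` over `F_q`. -/
noncomputable def matrixOfCoords {Fq K : Type*} [Field Fq] [Field K] [Algebra Fq K]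
    {m : ℕ} (b : Module.Basis (Fin m) Fq K) (α : Fin m → K) : Matrix (Fin m) (Fin m) Fq :=
  Matrix.of fun i j => b.repr (α i) j

open Classical in
/-- The rank of a matrix is at most the number of its nonzero rows. -/
lemma rank_le_card_ne_zero_rows {R : Type*} [Field R] {m n : ℕ}
    [DecidableEq (Fin n → R)] (M : Matrix (Fin m) (Fin n) R) :
    M.rank ≤ (Finset.univ.filter fun i => M i ≠ 0).card := by
  classical
  rw [Matrix.rank_eq_finrank_span_row]
  set s : Finset (Fin n → R) := (Finset.univ.filter fun i => M i ≠ 0).image M with hs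
  have hsub : Submodule.span R (Set.range M) ≤ Submodule.span R (s : Set (Fin n → R)) := by
    rw [Submodule.span_le]
    rintro _ ⟨i, rfl⟩
    by_cases h : M i = 0
    · rw [h]; exact Submodule.zero_mem _
    · exact Submodule.subset_span (by rw [hs, Finset.mem_coe]; exact Finset.mem_image.mpr ⟨i, by simp [h], rfl⟩)
  calc Module.finrank R (Submodule.span R (Set.range M))
      ≤ Module.finrank R (Submodule.span R (s : Set (Fin n → R))) :=
        Submodule.finrank_mono hsub
    _ ≤ s.card := finrank_span_finset_le_card s
    _ ≤ (Finset.univ.filter fun i => M i ≠ 0).card := Finset.card_image_le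

/-- If `C₁, …, C_m` are codes in `F_{q^m}^t` with Hamming covering radii `R₁, …, R_m`, then
for every point `x` of the sum-rank space there is a codeword of
`SR_covering(C₁,…,C_m)` within sum-rank distance `R₁ + ⋯ + R_m` of `x`. -/
theorem srCovering_coveringRadius_le_sum (q m t : ℕ)
    (Fq K : Type) [Field Fq] [Fintype Fq] [Field K] [Fintype K] [DecidableEq K]
    [Algebra Fq K]
    (hq : Fintype.card Fq = q) (hK : Fintype.card K = q ^ m)
    (b : Module.Basis (Fin m) Fq K)
    (C : Fin m → Set (Fin t → K)) (R : Fin m → ℕ)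
    (hcov : ∀ i, ∀ x : Fin t → K, ∃ c ∈ C i, hammingDist x c ≤ R i) :
    ∀ x : Fin t → Matrix (Fin m) (Fin m) Fq,
      ∃ cs : Fin m → Fin t → K, (∀ i, cs i ∈ C i) ∧
        ∑ r : Fin t, (x r - matrixOfCoords b fun i => cs i r).rank ≤ ∑ i, R i := by
  classical
  intro x
  -- the field element whose coordinate row is row `i` of `x r`
  set α : Fin m → Fin t → K := fun i r => b.equivFun.symm (x r i) with hα
  choose cs hcsC hcsd using fun i => hcov i (α i)
  refine ⟨cs, hcsC, ?_⟩
  have key : ∀ r : Fin t,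
      (x r - matrixOfCoords b fun i => cs i r).rank
        ≤ (Finset.univ.filter fun i => α i r ≠ cs i r).card := by
    intro r
    refine (rank_le_card_ne_zero_rows _).trans (Finset.card_le_card ?_)
    intro i hi
    simp only [Finset.mem_filter, Finset.mem_univ, true_and] at hi ⊢
    intro hEq
    apply hi
    funext j
    have hx : x r i = b.equivFun (cs i r) := by
      rw [← hEq, hα]; exact (b.equivFun.apply_symm_apply _).symm
    simp [matrixOfCoords, Matrix.sub_apply, hx, Module.Basis.equivFun_apply]
  calc ∑ r : Fin t, (x r - matrixOfCoords b fun i => cs i r).rank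
      ≤ ∑ r : Fin t, (Finset.univ.filter fun i => α i r ≠ cs i r).card :=
        Finset.sum_le_sum fun r _ => key r
    _ = ∑ i : Fin m, (Finset.univ.filter fun r => α i r ≠ cs i r).card := by
        simp only [Finset.card_eq_sum_ones, Finset.sum_filter]
        exact Finset.sum_comm
    _ = ∑ i : Fin m, hammingDist (α i) (cs i) := by rfl
    _ ≤ ∑ i, R i := Finset.sum_le_sum fun i _ => hcsd i
end

section
/- If C is a code in F_{q^m}^t with Hamming covering radius R, then the sum-rank code SR_covering(C,…,C) (m copies) in (F_q^{m×m})^t has sum-rank covering radius at most mR. -/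
open Classical in
/-- Rank is at most the number of nonzero rows. -/
lemma rank_le_card_nonzero_rows {F : Type*} [Field F] [DecidableEq F] {m n : ℕ}
    (A : Matrix (Fin m) (Fin n) F) :
    A.rank ≤ (Finset.univ.filter (fun i => A i ≠ 0)).card := by
  rw [← Matrix.rank_transpose, Matrix.rank_eq_finrank_span_cols, Matrix.col_transpose]
  set s : Finset (Fin n → F) := (Finset.univ.filter (fun i => A i ≠ 0)).image A with hs
  have hspan : Submodule.span F (Set.range A) ≤ Submodule.span F (s : Set (Fin n → F)) := by
    rw [Submodule.span_le]
    rintro _ ⟨i, rfl⟩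
    by_cases h : A i = 0
    · rw [h]; exact (Submodule.span F _).zero_mem
    · exact Submodule.subset_span (by simp only [hs, Finset.coe_image]; exact Finset.mem_coe.mpr (Finset.mem_image_of_mem A (Finset.mem_filter.mpr ⟨Finset.mem_univ _, h⟩)))
  calc Module.finrank F (Submodule.span F (Set.range A))
      ≤ Module.finrank F (Submodule.span F (s : Set (Fin n → F))) :=
        Submodule.finrank_mono hspan
    _ ≤ s.card := finrank_span_finset_le_card s
    _ ≤ _ := Finset.card_image_le

/-- If `C ⊆ F_{q^m}^t` has Hamming covering radius `R`, then the sum-rank code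
`SR_covering(C,…,C)` (with `m` copies of `C`) has sum-rank covering radius at most `m R`. -/
theorem srCovering_coveringRadius_le_mul (q m t R : ℕ)
    (Fq K : Type) [Field Fq] [Fintype Fq] [Field K] [Fintype K] [DecidableEq K]
    [Algebra Fq K]
    (hq : Fintype.card Fq = q) (hK : Fintype.card K = q ^ m)
    (b : Module.Basis (Fin m) Fq K)
    (C : Set (Fin t → K))
    (hcov : ∀ x : Fin t → K, ∃ c ∈ C, hammingDist x c ≤ R) :
    ∀ x : Fin t → Matrix (Fin m) (Fin m) Fq,
      ∃ cs : Fin m → Fin t → K, (∀ i, cs i ∈ C) ∧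
        ∑ r : Fin t, (x r - matrixOfCoords b fun i => cs i r).rank ≤ m * R := by
  intro x
  classical
  -- interpret row `i` of the matrices as a word in `K^t`
  set y : Fin m → Fin t → K := fun i r => b.repr.symm (Finsupp.equivFunOnFinite.symm (x r i))
    with hy
  choose cs hcsC hcsd using fun i => hcov (y i)
  refine ⟨cs, hcsC, ?_⟩
  have key : ∀ r i, (x r - matrixOfCoords b fun i => cs i r) i ≠ 0 → y i r ≠ cs i r := by
    intro r i hne heq
    apply hne
    funext j
    have hx : x r i = ⇑(b.repr (y i r)) := by
      simp [hy, Finsupp.equivFunOnFinite]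
    simp [Matrix.sub_apply, matrixOfCoords, hx, heq]
  calc ∑ r : Fin t, (x r - matrixOfCoords b fun i => cs i r).rank
      ≤ ∑ r : Fin t, (Finset.univ.filter
          (fun i => (x r - matrixOfCoords b fun i => cs i r) i ≠ 0)).card :=
        Finset.sum_le_sum fun r _ => rank_le_card_nonzero_rows _
    _ ≤ ∑ r : Fin t, (Finset.univ.filter (fun i => y i r ≠ cs i r)).card :=
        Finset.sum_le_sum fun r _ => Finset.card_le_card (fun i hi => by
          simp only [Finset.mem_filter, Finset.mem_univ, true_and] at hi ⊢
          exact key r i hi)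
    _ = ∑ i : Fin m, (Finset.univ.filter (fun r => y i r ≠ cs i r)).card := by
        simp only [Finset.card_filter]
        rw [Finset.sum_comm]
    _ = ∑ i : Fin m, hammingDist (y i) (cs i) := by rfl
    _ ≤ ∑ i : Fin m, R := Finset.sum_le_sum fun i _ => hcsd i
    _ = m * R := by simp [mul_comm]
end

section
/- Let C₁ ⊆ F₄^t and C₂ ⊆ F₄^t be linear codes, and let SR(C₁,C₂) be the binary sum-rank code of matrix size 2 × 2 obtained by mapping each pair (c₁, c₂) of codewords to the tuple of 2 × 2 binary matrices representing the F₂-linear maps x ↦ c_{1i} x + c_{2i} x² on F₄. Then for each codeword c the sum-rank weight satisfies wt_sr(c) = 2·wt_H(c₁) + 2·wt_H(c₂) − 3·|supp(c₁) ∩ supp(c₂)|. -/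
/-- The rank of the `F₂`-linear map `x ↦ a x + b x²` on `F₄`, computed as the
`F₂`-dimension of the span of its range. -/
noncomputable def rankF4Map (a b : GaloisField 2 2) : ℕ :=
  Module.finrank (ZMod 2)
    (Submodule.span (ZMod 2) (Set.range fun x : GaloisField 2 2 => a * x + b * x ^ 2))

local notation "F" => GaloisField 2 2

noncomputable local instance : Fintype F := Fintype.ofFinite _

/-- The map `x ↦ a x + b x²` as an `F₂`-linear map. -/
noncomputable def phiF4 (a b : F) : F →ₗ[ZMod 2] F where
  toFun x := a * x + b * x ^ 2
  map_add' x y := by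
    show a * (x + y) + b * (x + y) ^ 2 = _
    rw [CharTwo.add_sq]; ring
  map_smul' c x := by
    show a * (c • x) + b * (c • x) ^ 2 = c • (a * x + b * x ^ 2)
    simp only [smul_pow, ZMod.pow_card, mul_smul_comm, smul_add]

lemma rankF4Map_eq (a b : F) :
    rankF4Map a b = Module.finrank (ZMod 2) (LinearMap.range (phiF4 a b)) := by
  unfold rankF4Map
  have hfun : (fun x : F => a * x + b * x ^ 2) = ⇑(phiF4 a b) := rfl
  rw [hfun, ← LinearMap.coe_range, Submodule.span_eq]

lemma finrankF : Module.finrank (ZMod 2) F = 2 := GaloisField.finrank 2 (by norm_num)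

lemma rank_add_ker (a b : F) :
    Module.finrank (ZMod 2) (LinearMap.range (phiF4 a b)) +
      Module.finrank (ZMod 2) (LinearMap.ker (phiF4 a b)) = 2 := by
  have := LinearMap.finrank_range_add_finrank_ker (phiF4 a b)
  rwa [finrankF] at this

lemma rank00 : rankF4Map 0 0 = 0 := by
  rw [rankF4Map_eq]
  have : phiF4 0 0 = 0 := by ext x; simp [phiF4]
  rw [this]; simp

lemma rank_of_inj {a b : F} (h : Function.Injective (phiF4 a b)) :
    rankF4Map a b = 2 := by
  rw [rankF4Map_eq]
  have hker : LinearMap.ker (phiF4 a b) = ⊥ := LinearMap.ker_eq_bot.mpr h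
  have := rank_add_ker a b
  rw [hker] at this; simpa using this

lemma rank_a0 {a : F} (ha : a ≠ 0) : rankF4Map a 0 = 2 := by
  apply rank_of_inj
  intro x y hxy
  simp only [phiF4, LinearMap.coe_mk, AddHom.coe_mk, zero_mul, add_zero] at hxy
  exact mul_left_cancel₀ ha hxy

lemma rank_0b {b : F} (hb : b ≠ 0) : rankF4Map 0 b = 2 := by
  apply rank_of_inj
  intro x y hxy
  simp only [phiF4, LinearMap.coe_mk, AddHom.coe_mk, zero_mul, zero_add] at hxy
  have hx2 : x ^ 2 = y ^ 2 := mul_left_cancel₀ hb hxy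
  have : frobenius F 2 x = frobenius F 2 y := by
    rw [frobenius_def, frobenius_def]; exact hx2
  exact frobenius_inj F 2 this

lemma rank_ab {a b : F} (ha : a ≠ 0) (hb : b ≠ 0) : rankF4Map a b = 1 := by
  classical
  rw [rankF4Map_eq]
  have hcard : Nat.card F = 4 := by rw [GaloisField.card 2 2 (by norm_num)]; norm_num
  -- kernel is nontrivial: a * b⁻¹ is a nonzero root
  have hker : LinearMap.ker (phiF4 a b) ≠ ⊥ := by
    intro h
    have hmem : a * b⁻¹ ∈ LinearMap.ker (phiF4 a b) := by
      simp only [LinearMap.mem_ker, phiF4, LinearMap.coe_mk, AddHom.coe_mk]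
      have h1 : b * (a * b⁻¹) ^ 2 = a * (a * b⁻¹) := by field_simp
      rw [h1, CharTwo.add_self_eq_zero]
    rw [h, Submodule.mem_bot] at hmem
    rcases mul_eq_zero.mp hmem with h1 | h1
    · exact ha h1
    · exact hb (by simpa using h1)
  -- there is an element outside {0, a * b⁻¹}
  have hx : ∃ x : F, x ≠ 0 ∧ x ≠ a * b⁻¹ := by
    by_contra hcon
    push_neg at hcon
    have hsub : (Finset.univ : Finset F) ⊆ {0, a * b⁻¹} := by
      intro x _
      rcases eq_or_ne x 0 with h | h
      · simp [h]
      · simp [hcon x h]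
    have hle := Finset.card_le_card hsub
    have h2 : ({0, a * b⁻¹} : Finset F).card ≤ 2 :=
      (Finset.card_insert_le _ _).trans (by simp)
    have h4 : (Finset.univ : Finset F).card = 4 := by
      rw [Finset.card_univ, ← Nat.card_eq_fintype_card, hcard]
    omega
  obtain ⟨x, hx0, hxab⟩ := hx
  -- range is nontrivial
  have hrange : LinearMap.range (phiF4 a b) ≠ ⊥ := by
    intro h
    have hmem : phiF4 a b x ∈ LinearMap.range (phiF4 a b) := LinearMap.mem_range_self _ x
    rw [h, Submodule.mem_bot] at hmem
    simp only [phiF4, LinearMap.coe_mk, AddHom.coe_mk] at hmem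
    have hfac : x * (a + b * x) = 0 := by rw [← hmem]; ring
    rcases mul_eq_zero.mp hfac with h1 | h1
    · exact hx0 h1
    · apply hxab
      have hbx : b * x = a := by
        have h2 : b * x = -a := eq_neg_of_add_eq_zero_right h1
        rwa [CharTwo.neg_eq] at h2
      rw [← hbx, mul_comm b x, mul_inv_cancel_right₀ hb]
  have h1 : 0 < Module.finrank (ZMod 2) (LinearMap.ker (phiF4 a b)) := by
    rcases Nat.eq_zero_or_pos (Module.finrank (ZMod 2) (LinearMap.ker (phiF4 a b))) with h | h
    · exact absurd (Submodule.finrank_eq_zero.mp h) hker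
    · exact h
  have h2 : 0 < Module.finrank (ZMod 2) (LinearMap.range (phiF4 a b)) := by
    rcases Nat.eq_zero_or_pos (Module.finrank (ZMod 2) (LinearMap.range (phiF4 a b))) with h | h
    · exact absurd (Submodule.finrank_eq_zero.mp h) hrange
    · exact h
  have h3 := rank_add_ker a b
  omega

/-- Weight formula for the binary sum-rank code `SR(C₁, C₂)` of matrix size `2 × 2`:
the sum-rank weight of the codeword corresponding to `(c₁, c₂)` equals
`2 wt_H(c₁) + 2 wt_H(c₂) − 3 |supp(c₁) ∩ supp(c₂)|`. -/
theorem srF4_weight_formula (t : ℕ) [DecidableEq (GaloisField 2 2)]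
    (C₁ C₂ : Submodule (GaloisField 2 2) (Fin t → GaloisField 2 2))
    (c₁ c₂ : Fin t → GaloisField 2 2) (h₁ : c₁ ∈ C₁) (h₂ : c₂ ∈ C₂) :
    ((∑ i, rankF4Map (c₁ i) (c₂ i) : ℕ) : ℤ) =
      2 * (hammingNorm c₁ : ℤ) + 2 * (hammingNorm c₂ : ℤ) -
        3 * ((Finset.univ.filter fun i => c₁ i ≠ 0 ∧ c₂ i ≠ 0).card : ℤ) := by
  have key : ∀ i, ((rankF4Map (c₁ i) (c₂ i) : ℕ) : ℤ) =
      2 * (if c₁ i ≠ 0 then (1 : ℤ) else 0) + 2 * (if c₂ i ≠ 0 then (1 : ℤ) else 0) -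
        3 * (if c₁ i ≠ 0 ∧ c₂ i ≠ 0 then (1 : ℤ) else 0) := by
    intro i
    rcases eq_or_ne (c₁ i) 0 with h1 | h1 <;> rcases eq_or_ne (c₂ i) 0 with h2 | h2 <;>
      simp [h1, h2, rank00, rank_a0, rank_0b, rank_ab]
  push_cast
  rw [Finset.sum_congr rfl fun i _ => key i]
  rw [Finset.sum_sub_distrib, Finset.sum_add_distrib, ← Finset.mul_sum, ← Finset.mul_sum,
    ← Finset.mul_sum, Finset.sum_boole, Finset.sum_boole, Finset.sum_boole]
  simp [hammingNorm]
end

section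
/- Let C₁ be the [t, t−u, 3] Hamming code over F_{q^m} with t = (q^{mu} − 1)/(q^m − 1), and C₂ the trivial [t, t−1, 2] code over F_{q^m}. Then the sum-rank code SR(C₁, C₂) of matrix size 2 × m has covering radius at most 2 in the sum-rank metric. -/
open Module

theorem finrank_eq_of_card_eq_pow {F V : Type*} [Field F] [Fintype F] [AddCommGroup V]
    [Module F V] [Fintype V] {q n : ℕ} (hF : Fintype.card F = q)
    (hV : Fintype.card V = q ^ n) : finrank F V = n :=
  Nat.pow_right_injective (hF ▸ Fintype.one_lt_card) <| by
    simp only [← hF, ← Module.card_eq_pow_finrank (K := F) (V := V), hV]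

theorem finrank_span_range_mul_add_mul_frobenius_le {F L K : Type*} [Field F] [Fintype F]
    [CommRing L] [Algebra F L] [Module.Finite F L] [Ring K] [Algebra F K]
    (φ : L →ₗ[F] K) (a b : K) :
    finrank F (Submodule.span F (Set.range fun x : L => a * φ x + b * φ (x ^ Fintype.card F)))
      ≤ finrank F L := by
  let f : L →ₗ[F] K := a • φ + b • φ ∘ₗ (FiniteField.frobeniusAlgHom F L).toLinearMap
  change finrank F (Submodule.span F (Set.range f)) ≤ _
  rw [← LinearMap.coe_range, Submodule.span_eq]
  exact LinearMap.finrank_range_le f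

theorem exists_forall_ne_eq_of_hammingDist_le_one {ι β : Type*} [Fintype ι] [Nonempty ι]
    [DecidableEq β] {x y : ι → β} (h : hammingDist x y ≤ 1) :
    ∃ j, ∀ i, i ≠ j → x i = y i := by
  obtain ⟨j, hj⟩ := Finset.card_le_one_iff_subset_singleton.mp h
  exact ⟨j, fun i hi => by_contra fun hne =>
    hi (Finset.mem_singleton.mp (hj (by simpa using hne)))⟩

theorem sum_update_sub_sum_eq_zero {ι M : Type*} [Fintype ι] [DecidableEq ι]
    [AddCommGroup M] (v : ι → M) (j : ι) :
    ∑ i, Function.update v j (v j - ∑ i, v i) i = 0 := by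
  rw [Finset.sum_update_of_mem (Finset.mem_univ j),
    Finset.sum_eq_add_sum_sdiff_singleton_of_mem (Finset.mem_univ j) v]
  abel

theorem sr_hamming_quasi_perfect_general (q t : ℕ)
    (Fq K Fq2 : Type) [Field Fq] [Fintype Fq] [Field K] [DecidableEq K]
    [Field Fq2] [Fintype Fq2] [Algebra Fq K] [Algebra Fq Fq2]
    (hcq : Fintype.card Fq = q)
    (hcq2 : Fintype.card Fq2 = q ^ 2)
    (φ : Fq2 →ₗ[Fq] K)
    (C₁ : Submodule K (Fin t → K))
    (hC₁cov : ∀ x : Fin t → K, ∃ c ∈ C₁, hammingDist x c ≤ 1) :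
    ∀ v₁ v₂ : Fin t → K,
      ∃ c₁ ∈ C₁, ∃ c₂ ∈ {x : Fin t → K | ∑ i, x i = 0},
        ∑ i : Fin t, Module.finrank Fq (Submodule.span Fq
          (Set.range fun x : Fq2 =>
            (v₁ i - c₁ i) * φ x + (v₂ i - c₂ i) * φ (x ^ q))) ≤ 2 := by
  intro v₁ v₂
  rcases isEmpty_or_nonempty (Fin t) with _ | _
  · exact ⟨0, C₁.zero_mem, 0, by simp, by simp⟩
  obtain ⟨c₁, hc₁, hdist⟩ := hC₁cov v₁
  obtain ⟨j, hj⟩ := exists_forall_ne_eq_of_hammingDist_le_one hdist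
  -- `C₁` matches `v₁` off one position `j`, and the parity-check code matches `v₂` off `j`
  let c₂ := Function.update v₂ j (v₂ j - ∑ i, v₂ i)
  refine ⟨c₁, hc₁, c₂, sum_update_sub_sum_eq_zero v₂ j, ?_⟩
  subst hcq
  rw [Finset.sum_eq_single_of_mem j (Finset.mem_univ j)]
  · calc _ ≤ finrank Fq Fq2 := finrank_span_range_mul_add_mul_frobenius_le φ _ _
      _ = 2 := finrank_eq_of_card_eq_pow rfl hcq2
  · intro i _ hi
    rw [Submodule.span_eq_bot.mpr ?_, finrank_bot]
    rintro _ ⟨x, rfl⟩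
    simp [hj i hi, show c₂ i = v₂ i from Function.update_of_ne hi _ _]

/-- Let `t = (q^{mu} − 1)/(q^m − 1)`, `C₁` the `[t, t−u, 3]` Hamming code over `F_{q^m}`
(a perfect code, with covering radius `1`), and `C₂` the trivial `[t, t−1, 2]` code
(the parity-check code).  Then the sum-rank code `SR(C₁, C₂)` of matrix size `2 × m`
has sum-rank covering radius at most `2`; the blocks are the `F_q`-linear maps
`x ↦ c₁ᵢ φ(x) + c₂ᵢ φ(x^q)` from `F_{q²}` to `F_{q^m}`, whose rank is the
`F_q`-dimension of (the span of) their range. -/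
theorem sr_hamming_quasi_perfect (q m u t : ℕ) (hm : 2 ≤ m) (hu : 0 < u)
    (Fq K Fq2 : Type) [Field Fq] [Fintype Fq] [Field K] [Fintype K] [DecidableEq K]
    [Field Fq2] [Fintype Fq2] [Algebra Fq K] [Algebra Fq Fq2]
    (hq : ∃ p k : ℕ, p.Prime ∧ 0 < k ∧ q = p ^ k)
    (hcq : Fintype.card Fq = q) (hcK : Fintype.card K = q ^ m)
    (hcq2 : Fintype.card Fq2 = q ^ 2)
    (ht : t = (q ^ (m * u) - 1) / (q ^ m - 1))
    (φ : Fq2 →ₗ[Fq] K) (hφ : Function.Injective φ)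
    (C₁ : Submodule K (Fin t → K))
    (hC₁k : Module.finrank K C₁ = t - u)
    (hC₁d : ∀ c ∈ C₁, c ≠ 0 → 3 ≤ hammingNorm c)
    (hC₁cov : ∀ x : Fin t → K, ∃ c ∈ C₁, hammingDist x c ≤ 1) :
    ∀ v₁ v₂ : Fin t → K,
      ∃ c₁ ∈ C₁, ∃ c₂ ∈ {x : Fin t → K | ∑ i, x i = 0},
        ∑ i : Fin t, Module.finrank Fq (Submodule.span Fq
          (Set.range fun x : Fq2 =>
            (v₁ i - c₁ i) * φ x + (v₂ i - c₂ i) * φ (x ^ q))) ≤ 2 :=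
  sr_hamming_quasi_perfect_general q t Fq K Fq2 hcq hcq2 φ C₁ hC₁cov
end

section
/- Let C₁, …, C_m ⊆ F_{q^m}^t be linear codes with minimum Hamming distances d₁, …, d_m. Then the sum-rank code SR(C₁,…,C_m) of matrix size m × m and block length t has minimum sum-rank distance at least min{d₁, 2d₂, 3d₃, …, m·d_m}. -/
/-! The `j`-th block is the `q`-polynomial map `L_j x = ∑ᵢ c_{ij} x^{q^i}`, which is
`F_q`-linear because `x ↦ x^q` is the Frobenius of `F_{q^m}` over `F_q`. Let `i₀` be the
first index with `c_{i₀} ≠ 0`. On a block with `c_{i₀ j} ≠ 0` we have `L_j x = g(x^{q^{i₀}})`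
for a polynomial `g` of degree at most `q^{m-1-i₀}` whose linear coefficient `c_{i₀ j}` is
nonzero; since `x ↦ x^{q^{i₀}}` is injective, `ker L_j` has at most `q^{m-1-i₀}` elements, so
`L_j` has rank at least `i₀ + 1`. There are at least `d_{i₀}` such blocks. -/

open Polynomial FiniteField Module
open LinearMap (ker range)

section LinearizedPolynomial

variable {R : Type*} [CommSemiring R] {n : ℕ}

/-- For `i < k` the exponent `q ^ (i - k)` truncates to `q ^ 0`; the lemmas below assume `a i = 0`
for those `i`. -/
noncomputable def shiftedLinearizedPoly (q k : ℕ) (a : Fin n → R) : R[X] :=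
  ∑ i, C (a i) * X ^ q ^ ((i : ℕ) - k)

theorem eval_pow_shiftedLinearizedPoly {q : ℕ} {a : Fin n → R} {k : Fin n}
    (hlow : ∀ i < k, a i = 0) (x : R) :
    (shiftedLinearizedPoly q k a).eval (x ^ q ^ (k : ℕ)) = ∑ i, a i * x ^ q ^ (i : ℕ) := by
  simp only [shiftedLinearizedPoly, eval_finsetSum, eval_mul, eval_C, eval_pow, eval_X]
  refine Finset.sum_congr rfl fun i _ => ?_
  rcases lt_or_ge i k with hik | hki
  · simp [hlow i hik]
  · rw [← pow_mul, ← pow_add, Nat.add_sub_cancel' (Fin.le_def.mp hki)]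

theorem coeff_one_shiftedLinearizedPoly {q : ℕ} (hq : 1 < q) {a : Fin n → R} {k : Fin n}
    (hlow : ∀ i < k, a i = 0) : (shiftedLinearizedPoly q k a).coeff 1 = a k := by
  rw [shiftedLinearizedPoly, finsetSum_coeff, Finset.sum_eq_single k]
  · simp
  · intro i _ hik
    rcases lt_or_gt_of_ne hik with hlt | hgt
    · simp [hlow i hlt]
    · have hpow : 1 < q ^ ((i : ℕ) - k) := Nat.one_lt_pow (by omega) hq
      rw [coeff_C_mul_X_pow, if_neg hpow.ne]
  · simp

theorem natDegree_shiftedLinearizedPoly_le {q : ℕ} (hq : 0 < q) (k : ℕ) (a : Fin n → R) :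
    (shiftedLinearizedPoly q k a).natDegree ≤ q ^ (n - 1 - k) :=
  natDegree_sum_le_of_forall_le _ _ fun i _ =>
    (natDegree_C_mul_X_pow_le _ _).trans (Nat.pow_le_pow_right hq (by omega))

end LinearizedPolynomial

section LinearizedMap

variable {Fq K : Type*} [Field Fq] [Fintype Fq] [Field K] [Algebra Fq K] {n : ℕ}

theorem FiniteField.frobeniusAlgHom_pow_apply {R : Type*} [CommRing R] [Algebra Fq R] (i : ℕ)
    (x : R) : (frobeniusAlgHom Fq R ^ i) x = x ^ Fintype.card Fq ^ i := by
  rw [AlgHom.coe_pow, coe_frobeniusAlgHom, pow_iterate]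

variable (Fq) in
noncomputable def linearizedMap (a : Fin n → K) : K →ₗ[Fq] K :=
  ∑ i, a i • (frobeniusAlgHom Fq K ^ (i : ℕ)).toLinearMap

theorem linearizedMap_apply (a : Fin n → K) (x : K) :
    linearizedMap Fq a x = ∑ i, a i * x ^ Fintype.card Fq ^ (i : ℕ) := by
  simp only [linearizedMap, LinearMap.sum_apply, LinearMap.smul_apply,
    AlgHom.toLinearMap_apply, frobeniusAlgHom_pow_apply, smul_eq_mul]

variable (Fq) in
theorem card_ker_linearizedMap_le {a : Fin n → K} {k : Fin n} (hlow : ∀ i < k, a i = 0)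
    (hk : a k ≠ 0) :
    Nat.card (ker (linearizedMap Fq a)) ≤ Fintype.card Fq ^ (n - 1 - k) := by
  classical
  have hg : shiftedLinearizedPoly (Fintype.card Fq) k a ≠ 0 := fun h => hk <| by
    rw [← coeff_one_shiftedLinearizedPoly (Fintype.one_lt_card (α := Fq)) hlow, h, coeff_zero]
  set g := shiftedLinearizedPoly (Fintype.card Fq) k a
  let frob := frobeniusAlgHom Fq K ^ (k : ℕ)
  have hroot (x : ker (linearizedMap Fq a)) : frob x ∈ g.roots.toFinset := by
    rw [Multiset.mem_toFinset, mem_roots hg, IsRoot, frobeniusAlgHom_pow_apply,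
      eval_pow_shiftedLinearizedPoly hlow, ← linearizedMap_apply, LinearMap.map_coe_ker]
  calc Nat.card (ker (linearizedMap Fq a))
      ≤ Nat.card g.roots.toFinset :=
        Nat.card_le_card_of_injective (fun x => ⟨frob x, hroot x⟩)
          fun x y hxy => Subtype.ext <| frob.toRingHom.injective (congrArg Subtype.val hxy :)
    _ ≤ g.natDegree := by
        rw [Nat.card_eq_fintype_card, Fintype.card_coe]
        exact (Multiset.toFinset_card_le _).trans (card_roots' g)
    _ ≤ Fintype.card Fq ^ (n - 1 - k) :=
        natDegree_shiftedLinearizedPoly_le Fintype.card_pos _ _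

variable (Fq) in
theorem finrank_le_finrank_range_linearizedMap_add [Finite K] {a : Fin n → K} {k : Fin n}
    (hlow : ∀ i < k, a i = 0) (hk : a k ≠ 0) :
    finrank Fq K ≤ finrank Fq (range (linearizedMap Fq a)) + (n - 1 - k) := by
  have : Module.Finite Fq K := .of_finite
  have hker : finrank Fq (ker (linearizedMap Fq a)) ≤ n - 1 - k := by
    have := card_ker_linearizedMap_le Fq hlow hk
    rw [natCard_eq_pow_finrank (K := Fq), Nat.card_eq_fintype_card] at this
    exact (Nat.pow_le_pow_iff_right Fintype.one_lt_card).mp this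
  have := LinearMap.finrank_range_add_finrank_ker (linearizedMap Fq a)
  omega

end LinearizedMap

theorem mul_hammingNorm_le_sum {ι : Type*} [Fintype ι] {β : ι → Type*} [∀ i, Zero (β i)]
    [∀ i, DecidableEq (β i)] (c : ∀ i, β i) (r : ι → ℕ) (w : ℕ)
    (h : ∀ i, c i ≠ 0 → w ≤ r i) :
    w * hammingNorm c ≤ ∑ i, r i :=
  calc w * hammingNorm c = (Finset.univ.filter fun i => c i ≠ 0).card • w := by
        rw [smul_eq_mul, mul_comm]; rfl
    _ ≤ ∑ i ∈ Finset.univ.filter fun i => c i ≠ 0, r i :=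
        Finset.card_nsmul_le_sum _ _ _ fun i hi => h i (Finset.mem_filter.mp hi).2
    _ ≤ ∑ i, r i := Finset.sum_le_sum_of_subset (Finset.filter_subset _ _)

theorem sr_min_distance_lower_bound_general (q m t : ℕ) (hm : 0 < m)
    (Fq K : Type) [Field Fq] [Fintype Fq] [Field K] [Fintype K] [DecidableEq K]
    [Algebra Fq K]
    (hcq : Fintype.card Fq = q) (hcK : Fintype.card K = q ^ m)
    (C : Fin m → Submodule K (Fin t → K)) (d : Fin m → ℕ)
    (hd : ∀ i, ∀ c ∈ C i, c ≠ 0 → d i ≤ hammingNorm c) :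
    ∀ cs : Fin m → Fin t → K, (∀ i, cs i ∈ C i) → cs ≠ 0 →
      Finset.univ.inf' (Finset.univ_nonempty_iff.mpr ⟨⟨0, hm⟩⟩)
          (fun i : Fin m => ((i : ℕ) + 1) * d i) ≤
        ∑ j : Fin t, Module.finrank Fq (Submodule.span Fq
          (Set.range fun x : K => ∑ i : Fin m, cs i j * x ^ q ^ (i : ℕ))) := by
  intro cs hcs hne
  subst hcq
  have hfinrank : finrank Fq K = m :=
    Nat.pow_right_injective Fintype.one_lt_card (card_eq_pow_finrank.symm.trans hcK)
  obtain ⟨i₀, hi₀, hlow⟩ : ∃ i₀, cs i₀ ≠ 0 ∧ ∀ i < i₀, cs i = 0 := by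
    obtain ⟨i₀, hi₀, hmin⟩ :=
      wellFounded_lt.has_min {i | cs i ≠ 0} (Function.ne_iff.mp hne)
    exact ⟨i₀, hi₀, fun i hi => not_not.mp fun h => hmin i h hi⟩
  have hblock (j : Fin t) (hj : cs i₀ j ≠ 0) :
      (i₀ : ℕ) + 1 ≤ finrank Fq (range (linearizedMap Fq (cs · j))) := by
    have := finrank_le_finrank_range_linearizedMap_add Fq
      (fun i hi => congrFun (hlow i hi) j) hj
    omega
  have hspan (j : Fin t) : range (linearizedMap Fq (cs · j)) = Submodule.span Fq
      (Set.range fun x : K => ∑ i, cs i j * x ^ Fintype.card Fq ^ (i : ℕ)) := by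
    rw [← Submodule.span_eq (range _), LinearMap.coe_range]
    congr with x
    exact linearizedMap_apply _ x
  calc _ ≤ ((i₀ : ℕ) + 1) * d i₀ := Finset.inf'_le _ (Finset.mem_univ i₀)
    _ ≤ ((i₀ : ℕ) + 1) * hammingNorm (cs i₀) :=
        Nat.mul_le_mul_left _ (hd i₀ _ (hcs i₀) hi₀)
    _ ≤ _ := mul_hammingNorm_le_sum _ _ _ hblock
    _ = _ := Finset.sum_congr rfl fun j _ => by rw [hspan j]

/-- Let `C₁, …, C_m ⊆ F_{q^m}^t` be linear codes with minimum Hamming distances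
`d₁, …, d_m`.  The sum-rank code `SR(C₁,…,C_m)` of matrix size `m × m`, whose block `j`
is (the matrix of) the `q`-polynomial map `x ↦ ∑ᵢ c_{ij} x^{q^{i-1}}` on `F_{q^m}`, has
minimum sum-rank distance at least `min{d₁, 2d₂, …, m d_m}`. -/
theorem sr_min_distance_lower_bound (q m t : ℕ) (hm : 0 < m)
    (Fq K : Type) [Field Fq] [Fintype Fq] [Field K] [Fintype K] [DecidableEq K]
    [Algebra Fq K]
    (hq : ∃ p k : ℕ, p.Prime ∧ 0 < k ∧ q = p ^ k)
    (hcq : Fintype.card Fq = q) (hcK : Fintype.card K = q ^ m)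
    (C : Fin m → Submodule K (Fin t → K)) (d : Fin m → ℕ)
    (hd : ∀ i, ∀ c ∈ C i, c ≠ 0 → d i ≤ hammingNorm c) :
    ∀ cs : Fin m → Fin t → K, (∀ i, cs i ∈ C i) → cs ≠ 0 →
      Finset.univ.inf' (Finset.univ_nonempty_iff.mpr ⟨⟨0, hm⟩⟩)
          (fun i : Fin m => ((i : ℕ) + 1) * d i) ≤
        ∑ j : Fin t, Module.finrank Fq (Submodule.span Fq
          (Set.range fun x : K => ∑ i : Fin m, cs i j * x ^ q ^ (i : ℕ))) :=
  sr_min_distance_lower_bound_general q m t hm Fq K hcq hcK C d hd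
end

section
/- Let q be a prime power, n = q² − 1, and let C be the cyclic code of length n over F_q with defining set T = C₀ ∪ C₁ ∪ C_{q+1} = {0, 1, q, q+1}. Then the minimum Hamming distance of C is at least 4. -/
/-! With locators `x_j = β^j` and `y_j = β^(qj)`, both injective because `q² ≡ 1 mod n` makes
`q` invertible modulo `n`, the four checks say `∑ a_j f(x_j, y_j) = 0` for every `f` in the span
of `1, X, Y, XY`. If the support of `a` were `k` together with at most two positions `i, l`, then
`f = (X - x_i)(Y - y_l)` would vanish at `i` and `l` but not at `k`, forcing `a_k = 0`. -/

open Finset Function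

theorem pow_mul_injective_of_coprime {M : Type*} [Monoid M] (β : M) {m : ℕ}
    (hm : m.Coprime (orderOf β)) : Injective fun j : Fin (orderOf β) ↦ β ^ (m * j) := by
  intro j l hjl
  have hfin : IsOfFinOrder β := orderOf_pos_iff.mp j.pos
  have hmod : (j : ℕ) ≡ l [MOD orderOf β] :=
    Nat.ModEq.cancel_left_of_coprime (Nat.gcd_comm _ _ ▸ hm) (hfin.pow_eq_pow_iff_modEq.mp hjl)
  exact Fin.ext (Nat.ModEq.eq_of_lt_of_lt hmod j.isLt l.isLt)

theorem exists_separating_pair {ι α β : Type*} [Nontrivial α] [Nontrivial β] {x : ι → α}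
    {y : ι → β} (hx : Injective x) (hy : Injective y) {k : ι} {T : Finset ι} (hk : k ∉ T)
    (hT : #T ≤ 2) : ∃ u v, x k ≠ u ∧ y k ≠ v ∧ ∀ j ∈ T, x j = u ∨ y j = v := by
  classical
  interval_cases h : #T
  · obtain ⟨u, hu⟩ := exists_ne (x k)
    obtain ⟨v, hv⟩ := exists_ne (y k)
    exact ⟨u, v, hu.symm, hv.symm, by simp [card_eq_zero.mp h]⟩
  · obtain ⟨i, rfl⟩ := card_eq_one.mp h
    have hki : k ≠ i := by simpa using hk
    exact ⟨x i, y i, hx.ne hki, hy.ne hki, by simp⟩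
  · obtain ⟨i, l, -, rfl⟩ := card_eq_two.mp h
    obtain ⟨hki, hkl⟩ : k ≠ i ∧ k ≠ l := by simpa using hk
    exact ⟨x i, y l, hx.ne hki, hy.ne hkl, by simp⟩

theorem four_le_hammingNorm_of_sum_eq_zero {ι R : Type*} [Fintype ι] [CommRing R] [IsDomain R]
    [DecidableEq R] {a x y : ι → R} (hx : Injective x) (hy : Injective y)
    (h₀ : ∑ j, a j = 0) (h₁ : ∑ j, a j * x j = 0) (h₂ : ∑ j, a j * y j = 0)
    (h₃ : ∑ j, a j * (x j * y j) = 0) (ha : a ≠ 0) : 4 ≤ hammingNorm a := by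
  by_contra! hlt
  obtain ⟨k, hk⟩ := Function.ne_iff.mp ha
  set S : Finset ι := {j | a j ≠ 0}
  have hcard : #S ≤ 3 := Nat.le_of_lt_succ hlt
  classical
  obtain ⟨u, v, hu, hv, hsep⟩ := exists_separating_pair hx hy (notMem_erase k S)
    (by rw [card_erase_of_mem (by simpa [S] using hk)]; omega)
  have hsum : ∑ j, a j * ((x j - u) * (y j - v)) = 0 := by
    have hexp : ∀ j, a j * ((x j - u) * (y j - v)) =
        a j * (x j * y j) - v * (a j * x j) - u * (a j * y j) + u * v * a j := fun j ↦ by ring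
    simp only [hexp, sum_add_distrib, sum_sub_distrib, ← mul_sum, h₀, h₁, h₂, h₃]
    ring
  rw [sum_eq_single k] at hsum
  · exact mul_ne_zero hk (mul_ne_zero (sub_ne_zero.mpr hu) (sub_ne_zero.mpr hv)) hsum
  · intro j _ hjk
    by_cases haj : a j = 0
    · simp [haj]
    · rcases hsep j (mem_erase.mpr ⟨hjk, by simpa [S] using haj⟩) with h | h <;> simp [h]
  · simp

theorem cyclic_code_min_distance_ge_four_general (q n : ℕ)
    (Fq L : Type) [Field Fq] [DecidableEq Fq] [Field L] [Algebra Fq L]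
    (hn : n = q ^ 2 - 1)
    (β : L) (hβ : orderOf β = n)
    (c : Fin n → Fq)
    (hc : ∀ i ∈ ({0, 1, q, q + 1} : Finset ℕ),
      ∑ j : Fin n, algebraMap Fq L (c j) * β ^ (i * (j : ℕ)) = 0)
    (hne : c ≠ 0) : 4 ≤ hammingNorm c := by
  classical
  rcases Nat.eq_zero_or_pos n with rfl | hpos
  · exact absurd (Subsingleton.elim c 0) hne
  subst hβ
  have hq : q.Coprime (orderOf β) := by
    have hqq : q * q = orderOf β + 1 := by rw [← sq]; omega
    exact Nat.coprime_of_mul_modEq_one q (hqq ▸ Nat.add_modEq_left)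
  have h₃ := hc (q + 1) (by simp)
  simp only [add_comm q 1, add_mul, pow_add] at h₃
  rw [← hammingNorm_comp (fun _ ↦ algebraMap Fq L) (fun _ ↦ (algebraMap Fq L).injective)
    (fun _ ↦ map_zero _)]
  refine four_le_hammingNorm_of_sum_eq_zero
    (pow_mul_injective_of_coprime β (Nat.coprime_one_left _)) (pow_mul_injective_of_coprime β hq)
    (by simpa using hc 0 (by simp)) (hc 1 (by simp)) (hc q (by simp)) h₃
    (by simpa [funext_iff] using hne)

/-- Let `q` be a prime power, `n = q² − 1`, and `C` the cyclic code of length `n` over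
`F_q` with defining set `T = {0, 1, q, q+1}` (zeros at `β^i`, `i ∈ T`, for a primitive
`n`-th root of unity `β` in an extension `L`).  Then the minimum Hamming distance of `C`
is at least `4`: every nonzero codeword has Hamming weight at least `4`. -/
theorem cyclic_code_min_distance_ge_four (q n : ℕ)
    (hq : ∃ p k : ℕ, p.Prime ∧ 0 < k ∧ q = p ^ k)
    (Fq L : Type) [Field Fq] [Fintype Fq] [DecidableEq Fq] [Field L] [Algebra Fq L]
    (hcq : Fintype.card Fq = q) (hn : n = q ^ 2 - 1)
    (β : L) (hβ : orderOf β = n)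
    (c : Fin n → Fq)
    (hc : ∀ i ∈ ({0, 1, q, q + 1} : Finset ℕ),
      ∑ j : Fin n, algebraMap Fq L (c j) * β ^ (i * (j : ℕ)) = 0)
    (hne : c ≠ 0) : 4 ≤ hammingNorm c :=
  cyclic_code_min_distance_ge_four_general q n Fq L hn β hβ c hc hne
end

section
/- Let C₁ ⊆ F₄^t be the trivial [t, t−1, 2] code over F₄ (e.g. the parity-check code) and C₂ ⊆ F₄^t a linear [t, k, 4] code with Hamming covering radius 2. Then the binary sum-rank code SR(C₁, C₂) of matrix size 2 × 2 has minimum sum-rank distance 4 and sum-rank covering radius 2, i.e. it is quasi-perfect. -/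
local notation "F4" => GaloisField 2 2

open Module

/-- The map `x ↦ a x + b x²` as an `F₂`-linear map on `F₄`. -/
noncomputable def gmapF4 (a b : F4) : F4 →ₗ[ZMod 2] F4 where
  toFun x := a * x + b * x ^ 2
  map_add' x y := by simp only [CharTwo.add_sq]; ring
  map_smul' c x := by
    fin_cases c
    · show a * ((0 : ZMod 2) • x) + b * ((0 : ZMod 2) • x) ^ 2 = (0 : ZMod 2) • _
      simp
    · show a * ((1 : ZMod 2) • x) + b * ((1 : ZMod 2) • x) ^ 2 = (1 : ZMod 2) • _
      simp

@[simp] lemma gmapF4_apply (a b x : F4) : gmapF4 a b x = a * x + b * x ^ 2 := rfl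

lemma rf4_eq (a b : F4) :
    rankF4Map a b = Module.finrank (ZMod 2) (LinearMap.range (gmapF4 a b)) := by
  have h : (Set.range fun x : F4 => a * x + b * x ^ 2) = ↑(LinearMap.range (gmapF4 a b)) := by
    rw [LinearMap.coe_range]; rfl
  rw [rankF4Map, h, Submodule.span_eq]

lemma finrankF4 : Module.finrank (ZMod 2) F4 = 2 := GaloisField.finrank 2 (by norm_num)

lemma rf4_nullity (a b : F4) :
    rankF4Map a b + Module.finrank (ZMod 2) (LinearMap.ker (gmapF4 a b)) = 2 := by
  rw [rf4_eq, LinearMap.finrank_range_add_finrank_ker, finrankF4]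

lemma rf4_le_two (a b : F4) : rankF4Map a b ≤ 2 := le_of_add_le_left (rf4_nullity a b).le

lemma rf4_zero : rankF4Map (0 : F4) 0 = 0 := by
  have h := rf4_nullity (0 : F4) 0
  have hker : LinearMap.ker (gmapF4 (0 : F4) 0) = ⊤ := by ext x; simp
  rw [hker] at h
  simp only [finrank_top, finrankF4] at h
  omega

lemma rf4_two_left (a : F4) (ha : a ≠ 0) : rankF4Map a 0 = 2 := by
  have h := rf4_nullity a 0
  have hker : LinearMap.ker (gmapF4 a 0) = ⊥ := by
    ext x
    simp only [LinearMap.mem_ker, gmapF4_apply, Submodule.mem_bot, zero_mul, add_zero]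
    constructor
    · intro hx
      rcases mul_eq_zero.1 hx with h | h
      · exact absurd h ha
      · exact h
    · intro hx; simp [hx]
  rw [hker, finrank_bot] at h
  omega

lemma rf4_two_right (b : F4) (hb : b ≠ 0) : rankF4Map 0 b = 2 := by
  have h := rf4_nullity 0 b
  have hker : LinearMap.ker (gmapF4 0 b) = ⊥ := by
    ext x
    simp only [LinearMap.mem_ker, gmapF4_apply, Submodule.mem_bot, zero_mul, zero_add]
    constructor
    · intro hx
      rcases mul_eq_zero.1 hx with h | h
      · exact absurd h hb
      · exact pow_eq_zero_iff (n := 2) (by norm_num) |>.1 h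
    · intro hx; simp [hx]
  rw [hker, finrank_bot] at h
  omega

lemma rf4_one (a b : F4) (ha : a ≠ 0) (hb : b ≠ 0) : rankF4Map a b = 1 := by
  have h := rf4_nullity a b
  have hker : LinearMap.ker (gmapF4 a b) = Submodule.span (ZMod 2) {a * b⁻¹} := by
    ext x
    simp only [LinearMap.mem_ker, Submodule.mem_span_singleton]
    constructor
    · intro hx
      rw [gmapF4_apply] at hx
      have hfac : x * (a + b * x) = 0 := by rw [← hx]; ring
      rcases mul_eq_zero.1 hfac with h0 | h1
      · exact ⟨0, by simp [h0]⟩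
      · refine ⟨1, ?_⟩
        have hbx : b * x = a := by
          rw [eq_neg_of_add_eq_zero_right h1, CharTwo.neg_eq]
        have hx' : x = b⁻¹ * (b * x) := by
          rw [← mul_assoc, inv_mul_cancel₀ hb, one_mul]
        rw [hx', hbx, one_smul, mul_comm]
    · rintro ⟨c, rfl⟩
      have h0 : gmapF4 a b (a * b⁻¹) = 0 := by
        rw [gmapF4_apply]
        have e1 : b * (a * b⁻¹) ^ 2 = a * (a * b⁻¹) := by field_simp
        rw [e1, CharTwo.add_self_eq_zero]
      rw [map_smul, h0, smul_zero]
  have hne : a * b⁻¹ ≠ 0 := by simp [ha, hb]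
  rw [hker, finrank_span_singleton hne] at h
  omega

lemma rf4_pos (a b : F4) (hb : b ≠ 0) : 1 ≤ rankF4Map a b := by
  by_cases ha : a = 0
  · rw [ha, rf4_two_right b hb]; omega
  · rw [rf4_one a b ha hb]

lemma exists_third (s : F4) : ∃ α : F4, α ≠ 0 ∧ α ≠ s := by
  classical
  haveI : Fintype F4 := Fintype.ofFinite _
  have hcard : Fintype.card F4 = 4 := by
    rw [← Nat.card_eq_fintype_card]
    have := GaloisField.card 2 2 (by norm_num)
    simpa using this
  by_contra hcon
  push_neg at hcon
  have hsub : (Finset.univ : Finset F4) ⊆ {0, s} := by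
    intro x _
    by_cases hx : x = 0
    · simp [hx]
    · simp [hcon x hx]
  have h1 := Finset.card_le_card hsub
  rw [Finset.card_univ, hcard] at h1
  have h2 : ({0, s} : Finset F4).card ≤ 2 :=
    (Finset.card_insert_le _ _).trans (by simp)
  omega

/-- Let `C₁` be the trivial `[t, t−1, 2]` (parity-check) code over `F₄` and `C₂` a
linear `[t, k, 4]` code over `F₄` with Hamming covering radius `2`.  Then the binary
sum-rank code `SR(C₁, C₂)` of matrix size `2 × 2` has minimum sum-rank distance `4` and
sum-rank covering radius exactly `2`; i.e. it is quasi-perfect. -/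
theorem quasi_perfect_22 (t k : ℕ) [DecidableEq (GaloisField 2 2)]
    (C₂ : Submodule (GaloisField 2 2) (Fin t → GaloisField 2 2))
    (hk : Module.finrank (GaloisField 2 2) C₂ = k)
    (hd : ∀ c ∈ C₂, c ≠ 0 → 4 ≤ hammingNorm c)
    (hdex : ∃ c ∈ C₂, c ≠ 0 ∧ hammingNorm c = 4)
    (hcov : ∀ x : Fin t → GaloisField 2 2, ∃ c ∈ C₂, hammingDist x c ≤ 2)
    (hcovex : ∀ R' : ℕ,
      (∀ x : Fin t → GaloisField 2 2, ∃ c ∈ C₂, hammingDist x c ≤ R') → 2 ≤ R') :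
    (∀ c₁ ∈ {x : Fin t → GaloisField 2 2 | ∑ i, x i = 0}, ∀ c₂ ∈ C₂,
      ¬(c₁ = 0 ∧ c₂ = 0) → 4 ≤ ∑ i, rankF4Map (c₁ i) (c₂ i)) ∧
    (∃ c₁ ∈ {x : Fin t → GaloisField 2 2 | ∑ i, x i = 0}, ∃ c₂ ∈ C₂,
      ¬(c₁ = 0 ∧ c₂ = 0) ∧ ∑ i, rankF4Map (c₁ i) (c₂ i) = 4) ∧
    (∀ v₁ v₂ : Fin t → GaloisField 2 2,
      ∃ c₁ ∈ {x : Fin t → GaloisField 2 2 | ∑ i, x i = 0}, ∃ c₂ ∈ C₂,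
        ∑ i, rankF4Map (v₁ i - c₁ i) (v₂ i - c₂ i) ≤ 2) ∧
    (∀ R' : ℕ, (∀ v₁ v₂ : Fin t → GaloisField 2 2,
      ∃ c₁ ∈ {x : Fin t → GaloisField 2 2 | ∑ i, x i = 0}, ∃ c₂ ∈ C₂,
        ∑ i, rankF4Map (v₁ i - c₁ i) (v₂ i - c₂ i) ≤ R') → 2 ≤ R') := by
  refine ⟨?_, ?_, ?_, ?_⟩
  -- Part 1: minimum distance ≥ 4
  · intro c₁ hc₁ c₂ hc₂ hne
    by_cases h2 : c₂ = 0
    · -- c₂ = 0, so c₁ ≠ 0 and every nonzero block contributes 2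
      subst h2
      have hc1ne : c₁ ≠ 0 := fun h => hne ⟨h, rfl⟩
      have hs : ∑ i, c₁ i = 0 := hc₁
      obtain ⟨j, hj⟩ := Function.ne_iff.1 hc1ne
      have hj' : c₁ j ≠ 0 := hj
      have hsecond : ∃ j', j' ≠ j ∧ c₁ j' ≠ 0 := by
        by_contra hcon
        push_neg at hcon
        have := Finset.sum_eq_single (s := Finset.univ) (f := fun i => c₁ i) j
          (fun i _ hij => hcon i hij) (by simp)
        rw [hs] at this
        exact hj' this.symm
      obtain ⟨j', hjj', hj'ne⟩ := hsecond
      have hsum : ∑ i ∈ ({j', j} : Finset (Fin t)), rankF4Map (c₁ i) 0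
          ≤ ∑ i, rankF4Map (c₁ i) 0 :=
        Finset.sum_le_sum_of_subset (Finset.subset_univ _)
      rw [Finset.sum_pair hjj', rf4_two_left _ hj'ne, rf4_two_left _ hj'] at hsum
      simp only [Pi.zero_apply]
      omega
    · -- c₂ ≠ 0, so its ≥ 4 nonzero blocks each contribute ≥ 1
      have h4 : 4 ≤ hammingNorm c₂ := hd c₂ hc₂ h2
      have heq : hammingNorm c₂ = ∑ i, if c₂ i ≠ 0 then 1 else 0 := by
        rw [hammingNorm, Finset.card_filter]
      have hle : (∑ i, if c₂ i ≠ 0 then 1 else 0) ≤ ∑ i, rankF4Map (c₁ i) (c₂ i) := by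
        refine Finset.sum_le_sum fun i _ => ?_
        by_cases h : c₂ i = 0
        · simp [h]
        · simp only [h, if_pos (by exact h : c₂ i ≠ 0)]
          exact rf4_pos _ _ h
      omega
  -- Part 2: minimum distance = 4 is attained
  · obtain ⟨c, hcC, hcne, hc4⟩ := hdex
    refine ⟨fun i => if c i ≠ 0 then 1 else 0, ?_, c, hcC, fun h => hcne h.2, ?_⟩
    · show ∑ i, (if c i ≠ 0 then (1 : F4) else 0) = 0
      rw [← Finset.sum_filter, Finset.sum_const]
      have hcard : (Finset.filter (fun a => c a ≠ 0) Finset.univ).card = 4 := hc4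
      rw [hcard, (show (4 : ℕ) = 2 * 2 by rfl), mul_smul, two_smul,
        CharTwo.add_self_eq_zero]
    · have hterm : ∀ i, rankF4Map (if c i ≠ 0 then (1 : F4) else 0) (c i)
          = if c i ≠ 0 then 1 else 0 := by
        intro i
        by_cases h : c i = 0
        · simp [h, rf4_zero]
        · simp [h, rf4_one 1 (c i) one_ne_zero h]
      refine Eq.trans (Finset.sum_congr rfl fun i _ => hterm i) ?_
      rw [← Finset.card_filter]
      exact hc4
  -- Part 3: covering radius ≤ 2
  · intro v₁ v₂
    rcases Nat.eq_zero_or_pos t with rfl | ht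
    · refine ⟨v₁, ?_, 0, C₂.zero_mem, ?_⟩ <;>
        simp [Finset.univ_eq_empty]
    obtain ⟨c₂, hc₂, hdist⟩ := hcov v₂
    set s : F4 := ∑ i, v₁ i with hs
    set E : Finset (Fin t) := {i | v₂ i ≠ c₂ i} with hEdef
    have hE2 : E.card ≤ 2 := hdist
    have hwE : ∀ i, i ∉ E → v₂ i - c₂ i = 0 := by
      intro i hi
      rw [sub_eq_zero]
      by_contra hne
      exact hi (Finset.mem_filter.2 ⟨Finset.mem_univ i, hne⟩)
    by_cases hE1 : E.card ≤ 1
    · -- at most one erroneous block: put all of v₁'s discrepancy there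
      set j : Fin t := if h : E.Nonempty then h.choose else ⟨0, ht⟩ with hjdef
      have hEsub : ∀ i ∈ E, i = j := by
        intro i hi
        have hne : E.Nonempty := ⟨i, hi⟩
        have hjE : j ∈ E := by rw [hjdef, dif_pos hne]; exact hne.choose_spec
        exact Finset.card_le_one.1 hE1 i hi j hjE
      set eS : Fin t → F4 := Pi.single j s with heS
      refine ⟨v₁ - eS, ?_, c₂, hc₂, ?_⟩
      · show ∑ i, (v₁ i - eS i) = 0
        rw [Finset.sum_sub_distrib, heS, Finset.sum_pi_single']
        simp [hs]
      · have hsimp : ∀ i, v₁ i - (v₁ - eS) i = eS i := by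
          intro i; simp [sub_sub_cancel]
        calc ∑ i, rankF4Map (v₁ i - (v₁ - eS) i) (v₂ i - c₂ i)
            = ∑ i, rankF4Map (eS i) (v₂ i - c₂ i) :=
              Finset.sum_congr rfl fun i _ => by rw [hsimp]
          _ = rankF4Map (eS j) (v₂ j - c₂ j) := by
              refine Finset.sum_eq_single j (fun i _ hij => ?_) (by simp)
              have hiE : i ∉ E := fun h => hij (hEsub i h)
              rw [heS, Pi.single_eq_of_ne hij, hwE i hiE, rf4_zero]
          _ ≤ 2 := rf4_le_two _ _
    · -- exactly two erroneous blocks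
      have hE2' : E.card = 2 := le_antisymm hE2 (by omega)
      obtain ⟨j, j', hjj', hEeq⟩ := Finset.card_eq_two.1 hE2'
      obtain ⟨α, hα0, hαs⟩ := exists_third s
      set β : F4 := s - α with hβ
      have hβ0 : β ≠ 0 := sub_ne_zero_of_ne fun h => hαs h.symm
      set e : Fin t → F4 := Pi.single j α + Pi.single j' β with he
      have hej : e j = α := by
        rw [he, Pi.add_apply, Pi.single_eq_same, Pi.single_eq_of_ne hjj', add_zero]
      have hej' : e j' = β := by
        rw [he, Pi.add_apply, Pi.single_eq_same, Pi.single_eq_of_ne hjj'.symm, zero_add]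
      have hez : ∀ i, i ≠ j → i ≠ j' → e i = 0 := by
        intro i hij hij'
        rw [he, Pi.add_apply, Pi.single_eq_of_ne hij, Pi.single_eq_of_ne hij', add_zero]
      refine ⟨v₁ - e, ?_, c₂, hc₂, ?_⟩
      · show ∑ i, (v₁ i - e i) = 0
        have hes : ∑ i, e i = s := by
          rw [he]
          simp only [Pi.add_apply]
          rw [Finset.sum_add_distrib, Finset.sum_pi_single', Finset.sum_pi_single']
          simp [hβ]
        rw [Finset.sum_sub_distrib, hes]
        simp [hs]
      · have hsimp : ∀ i, v₁ i - (v₁ - e) i = e i := by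
          intro i; simp [sub_sub_cancel]
        have hz : ∀ i ∈ Finset.univ, i ∉ E → rankF4Map (e i) (v₂ i - c₂ i) = 0 := by
          intro i _ hiE
          have hij : i ≠ j := fun h => hiE (by rw [hEeq, h]; exact Finset.mem_insert_self _ _)
          have hij' : i ≠ j' := fun h => hiE (by
            rw [hEeq, h]; exact Finset.mem_insert_of_mem (Finset.mem_singleton_self _))
          rw [hez i hij hij', hwE i hiE, rf4_zero]
        have hjE : j ∈ E := by rw [hEeq]; exact Finset.mem_insert_self _ _
        have hj'E : j' ∈ E := by
          rw [hEeq]; exact Finset.mem_insert_of_mem (Finset.mem_singleton_self _)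
        have hwj : v₂ j - c₂ j ≠ 0 := sub_ne_zero_of_ne (Finset.mem_filter.1 hjE).2
        have hwj' : v₂ j' - c₂ j' ≠ 0 := sub_ne_zero_of_ne (Finset.mem_filter.1 hj'E).2
        calc ∑ i, rankF4Map (v₁ i - (v₁ - e) i) (v₂ i - c₂ i)
            = ∑ i, rankF4Map (e i) (v₂ i - c₂ i) :=
              Finset.sum_congr rfl fun i _ => by rw [hsimp]
          _ = ∑ i ∈ E, rankF4Map (e i) (v₂ i - c₂ i) :=
              (Finset.sum_subset (Finset.subset_univ E) hz).symm
          _ = rankF4Map (e j) (v₂ j - c₂ j) + rankF4Map (e j') (v₂ j' - c₂ j') := by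
              rw [hEeq, Finset.sum_pair hjj']
          _ ≤ 2 := by
              rw [hej, hej', rf4_one _ _ hα0 hwj, rf4_one _ _ hβ0 hwj']
  -- Part 4: covering radius ≥ 2
  · intro R' H
    refine hcovex R' fun x => ?_
    obtain ⟨c₁, _, c₂, hc₂, hsum⟩ := H 0 x
    refine ⟨c₂, hc₂, ?_⟩
    have heq : hammingDist x c₂ = ∑ i, if x i ≠ c₂ i then 1 else 0 := by
      rw [hammingDist, Finset.card_filter]
    have hle : (∑ i, if x i ≠ c₂ i then 1 else 0)
        ≤ ∑ i, rankF4Map ((0 : Fin t → F4) i - c₁ i) (x i - c₂ i) := by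
      refine Finset.sum_le_sum fun i _ => ?_
      by_cases h : x i = c₂ i
      · simp [h]
      · simp only [h, if_pos (by exact h : x i ≠ c₂ i)]
        exact rf4_pos _ _ (sub_ne_zero_of_ne h)
    omega
end
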